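/- Let (Ω, F, P) be a probability space, ρ ∈ (0,1), α > 0. Let v_t : Ω → ℝ (t ∈ ℕ₀) be nonnegative random variables and let k_n : Ω → ℕ₀ (n ∈ ℕ₀) be random variables such that almost surely (k_n) is strictly increasing with k_0 = 0 and (v_t) is a cycle-Lyapunov sequence for (ρ, α, (k_n)). Suppose v_0 is independent of the σ-algebra generated by (Δ_n)_{n≥1} and E[v_0] < ∞. If there exists Ω' < 1 such that E[Ξ(1)] < ∞ and E[Ξ(n+1)] ≤ Ω' · E[Ξ(n)] for every n ≥ 1, then Σ_{t=0}^{∞} E[v_t] < ∞. -/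

import Mathlib

open MeasureTheory
open scoped ENNReal

/-- `v : ℕ → ℝ` is a cycle-Lyapunov sequence for `(ρ, α, k)`: it is nonnegative, satisfies
`v (k n + 1) ≤ α * v (k n)` at the start of each cycle, and contracts by `ρ` at every step
`t` with `k n + 1 ≤ t ≤ k (n+1) - 1` within a cycle. -/
def IsCycleLyapunov (ρ α : ℝ) (k : ℕ → ℕ) (v : ℕ → ℝ) : Prop :=
  (∀ t, 0 ≤ v t) ∧
  (∀ n, v (k n + 1) ≤ α * v (k n)) ∧
  (∀ n t, k n + 1 ≤ t → t < k (n + 1) → v (t + 1) ≤ ρ * v t)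

/-- `Ξ(n) = α^n · ρ^{Σ_{i=1}^{n} (Δ_i − 1)}` where `Δ_i = k i − k (i−1)`; in particular
`Ξ(0) = 1` (empty sum). -/
noncomputable def Xi (ρ α : ℝ) (k : ℕ → ℕ) (n : ℕ) : ℝ :=
  α ^ n * ρ ^ (∑ i ∈ Finset.range n, (k (i + 1) - k i - 1))

/-!
Pathwise, `v` decays geometrically inside each cycle and grows by at most `α` at each cycle
start, so `v (k n) ≤ Ξ(n) v 0` and the values in cycle `n` are at most `α ρ^j Ξ(n) v 0`; hence
`∑ₜ v t ≤ v 0 + α (1 - ρ)⁻¹ ∑ₙ Ξ(n) v 0`. Since `Ξ(n)` depends only on the cycle lengths,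
independence factorises `E[Ξ(n) v 0] = E[Ξ(n)] E[v 0]`, and the ratio condition makes
`∑ₙ E[Ξ(n)]` a dominated geometric series.
-/

section Deterministic

variable {ρ α : ℝ} {k : ℕ → ℕ} {v : ℕ → ℝ}

@[simp]
lemma Xi_zero (ρ α : ℝ) (k : ℕ → ℕ) : Xi ρ α k 0 = 1 := by
  simp [Xi]

lemma Xi_succ (ρ α : ℝ) (k : ℕ → ℕ) (n : ℕ) :
    Xi ρ α k (n + 1) = ρ ^ (k (n + 1) - k n - 1) * (α * Xi ρ α k n) := by
  rw [Xi, Xi, Finset.sum_range_succ, pow_add, pow_succ]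
  ring

lemma Xi_nonneg (hρ : 0 ≤ ρ) (hα : 0 ≤ α) (k : ℕ → ℕ) (n : ℕ) : 0 ≤ Xi ρ α k n :=
  mul_nonneg (pow_nonneg hα n) (pow_nonneg hρ _)

lemma StrictMono.exists_le_lt_succ (hk : StrictMono k) (hk0 : k 0 = 0) (t : ℕ) :
    ∃ n, k n ≤ t ∧ t < k (n + 1) := by
  obtain ⟨n, hn, hn'⟩ :=
    hk.exists_between_of_tendsto_atTop hk.tendsto_atTop (x := t + 1) (by omega)
  exact ⟨n, by omega, by omega⟩

namespace IsCycleLyapunov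

lemma le_pow_mul_start (hρ : 0 ≤ ρ) (hv : IsCycleLyapunov ρ α k v) (n : ℕ) :
    ∀ j, k n + 1 + j ≤ k (n + 1) → v (k n + 1 + j) ≤ ρ ^ j * (α * v (k n))
  | 0, _ => by simpa using hv.2.1 n
  | j + 1, hj => calc
      v (k n + 1 + (j + 1)) ≤ ρ * v (k n + 1 + j) :=
        hv.2.2 n (k n + 1 + j) (by omega) (by omega)
      _ ≤ ρ * (ρ ^ j * (α * v (k n))) :=
        mul_le_mul_of_nonneg_left (le_pow_mul_start hρ hv n j (by omega)) hρ
      _ = ρ ^ (j + 1) * (α * v (k n)) := by ring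

lemma le_Xi_mul (hρ : 0 ≤ ρ) (hα : 0 ≤ α) (hk : StrictMono k) (hk0 : k 0 = 0)
    (hv : IsCycleLyapunov ρ α k v) : ∀ n, v (k n) ≤ Xi ρ α k n * v 0
  | 0 => by simp [hk0]
  | n + 1 => by
    have hlt : k n < k (n + 1) := hk n.lt_succ_self
    have hend := hv.le_pow_mul_start hρ n (k (n + 1) - k n - 1) (by omega)
    rw [show k n + 1 + (k (n + 1) - k n - 1) = k (n + 1) by omega] at hend
    calc v (k (n + 1)) ≤ ρ ^ (k (n + 1) - k n - 1) * (α * v (k n)) := hend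
      _ ≤ ρ ^ (k (n + 1) - k n - 1) * (α * (Xi ρ α k n * v 0)) := by
        gcongr
        exact le_Xi_mul hρ hα hk hk0 hv n
      _ = Xi ρ α k (n + 1) * v 0 := by rw [Xi_succ]; ring

lemma succ_le_pow_mul_Xi_mul (hρ : 0 ≤ ρ) (hα : 0 ≤ α) (hk : StrictMono k) (hk0 : k 0 = 0)
    (hv : IsCycleLyapunov ρ α k v) {n t : ℕ} (hnt : k n ≤ t) (htn : t < k (n + 1)) :
    v (t + 1) ≤ ρ ^ (t - k n) * (α * (Xi ρ α k n * v 0)) := by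
  have h := hv.le_pow_mul_start hρ n (t - k n) (by omega)
  rw [show k n + 1 + (t - k n) = t + 1 by omega] at h
  refine h.trans ?_
  gcongr
  exact hv.le_Xi_mul hρ hα hk hk0 n

/-- Every `t ≥ 1` is `k n + 1 + j` for a unique cycle `n` and offset `j`, so the pathwise sum
is dominated by a double sum over `(n, j)`. -/
lemma tsum_ofReal_le (hρ : 0 ≤ ρ) (hα : 0 ≤ α) (hk : StrictMono k) (hk0 : k 0 = 0)
    (hv : IsCycleLyapunov ρ α k v) :
    ∑' t, ENNReal.ofReal (v t) ≤ ENNReal.ofReal (v 0) +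
      (∑' j : ℕ, ENNReal.ofReal ρ ^ j) * ENNReal.ofReal α *
        ∑' n, ENNReal.ofReal (Xi ρ α k n) * ENNReal.ofReal (v 0) := by
  choose cycle hcycle_le hlt_cycle using hk.exists_le_lt_succ hk0
  let g : ℕ × ℕ → ℝ≥0∞ := fun p => ENNReal.ofReal ρ ^ p.2 *
    (ENNReal.ofReal α * (ENNReal.ofReal (Xi ρ α k p.1) * ENNReal.ofReal (v 0)))
  let pos : ℕ → ℕ × ℕ := fun t => (cycle t, t - k (cycle t))
  have hpos : Function.Injective pos := by
    intro a b hab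
    obtain ⟨hcycle, hoffset⟩ := Prod.mk.inj hab
    have ha := hcycle_le a
    have hb := hcycle_le b
    rw [hcycle] at hoffset ha
    omega
  have hbound (t : ℕ) : ENNReal.ofReal (v (t + 1)) ≤ g (pos t) := by
    refine (ENNReal.ofReal_le_ofReal
      (hv.succ_le_pow_mul_Xi_mul hρ hα hk hk0 (hcycle_le t) (hlt_cycle t))).trans_eq ?_
    rw [ENNReal.ofReal_mul (pow_nonneg hρ _), ENNReal.ofReal_mul hα,
      ENNReal.ofReal_mul (Xi_nonneg hρ hα k _), ENNReal.ofReal_pow hρ]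
  rw [tsum_eq_zero_add' ENNReal.summable]
  gcongr
  calc ∑' t, ENNReal.ofReal (v (t + 1)) ≤ ∑' t, g (pos t) := ENNReal.tsum_le_tsum hbound
    _ ≤ ∑' p, g p := ENNReal.tsum_comp_le_tsum_of_injective hpos g
    _ = _ := by
      rw [ENNReal.tsum_prod']
      simp only [g, ENNReal.tsum_mul_left, ENNReal.tsum_mul_right]
      ring

end IsCycleLyapunov

end Deterministic

lemma ENNReal.tsum_lt_top_of_succ_le_mul {a : ℕ → ℝ≥0∞} {r : ℝ≥0∞} (hr : r < 1)
    (ha : a 0 < ⊤) (h : ∀ n, a (n + 1) ≤ r * a n) : ∑' n, a n < ⊤ := by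
  have hgeom (n : ℕ) : a n ≤ r ^ n * a 0 := by
    induction n with
    | zero => simp
    | succ n ih => calc
        a (n + 1) ≤ r * a n := h n
        _ ≤ r * (r ^ n * a 0) := by gcongr
        _ = r ^ (n + 1) * a 0 := by ring
  calc ∑' n, a n ≤ ∑' n, r ^ n * a 0 := ENNReal.tsum_le_tsum hgeom
    _ = (∑' n, r ^ n) * a 0 := ENNReal.tsum_mul_right
    _ < ⊤ := ENNReal.mul_lt_top (tsum_geometric_lt_top.2 hr) ha

section Probability

variable {Ω : Type*} {ρ α : ℝ} {k : ℕ → Ω → ℕ}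

abbrev incrementsMeasurableSpace (k : ℕ → Ω → ℕ) : MeasurableSpace Ω :=
  ⨆ n : ℕ, MeasurableSpace.comap (fun ω => k (n + 1) ω - k n ω) inferInstance

lemma measurable_Xi_incrementsMeasurableSpace (ρ α : ℝ) (k : ℕ → Ω → ℕ) (n : ℕ) :
    Measurable[incrementsMeasurableSpace k] fun ω => Xi ρ α (fun m => k m ω) n :=
  (measurable_from_nat (f := fun s : ℕ => α ^ n * ρ ^ s)).comp <|
    Finset.measurable_sum _ fun i _ =>
      (Measurable.of_comap_le (le_iSup (fun m => MeasurableSpace.comap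
        (fun ω => k (m + 1) ω - k m ω) inferInstance) i)).sub_const 1

variable [mΩ : MeasurableSpace Ω]

lemma incrementsMeasurableSpace_le (hk : ∀ n, Measurable (k n)) :
    incrementsMeasurableSpace k ≤ mΩ :=
  iSup_le fun n => ((hk (n + 1)).sub (hk n)).comap_le

lemma measurable_Xi (hk : ∀ n, Measurable (k n)) (n : ℕ) :
    Measurable fun ω => Xi ρ α (fun m => k m ω) n :=
  (measurable_Xi_incrementsMeasurableSpace ρ α k n).mono (incrementsMeasurableSpace_le hk) le_rfl

lemma lintegral_Xi_mul_eq {μ : Measure Ω} {f : Ω → ℝ} (hk : ∀ n, Measurable (k n))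
    (hf : Measurable f)
    (hindep : ProbabilityTheory.Indep (MeasurableSpace.comap f inferInstance)
      (incrementsMeasurableSpace k) μ) (n : ℕ) :
    ∫⁻ ω, ENNReal.ofReal (Xi ρ α (fun m => k m ω) n) * ENNReal.ofReal (f ω) ∂μ =
      (∫⁻ ω, ENNReal.ofReal (Xi ρ α (fun m => k m ω) n) ∂μ) * ∫⁻ ω, ENNReal.ofReal (f ω) ∂μ :=
  ProbabilityTheory.lintegral_mul_eq_lintegral_mul_lintegral_of_independent_measurableSpace
    (incrementsMeasurableSpace_le hk) hf.comap_le hindep.symm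
    (measurable_Xi_incrementsMeasurableSpace ρ α k n).ennreal_ofReal
    (Measurable.of_comap_le le_rfl).ennreal_ofReal

lemma tsum_lintegral_ofReal_le (μ : Measure Ω) (hρ : 0 ≤ ρ) (hα : 0 ≤ α) {v : ℕ → Ω → ℝ}
    (hv : ∀ t, Measurable (v t)) (hk : ∀ n, Measurable (k n))
    (hae : ∀ᵐ ω ∂μ, StrictMono (fun n => k n ω) ∧ k 0 ω = 0 ∧
      IsCycleLyapunov ρ α (fun n => k n ω) (fun t => v t ω))
    (hindep : ProbabilityTheory.Indep (MeasurableSpace.comap (v 0) inferInstance)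
      (incrementsMeasurableSpace k) μ) :
    ∑' t, ∫⁻ ω, ENNReal.ofReal (v t ω) ∂μ ≤ ∫⁻ ω, ENNReal.ofReal (v 0 ω) ∂μ +
      (∑' j : ℕ, ENNReal.ofReal ρ ^ j) * ENNReal.ofReal α *
        ((∑' n, ∫⁻ ω, ENNReal.ofReal (Xi ρ α (fun m => k m ω) n) ∂μ) *
          ∫⁻ ω, ENNReal.ofReal (v 0 ω) ∂μ) := by
  have hXi_v0 (n : ℕ) : Measurable fun ω =>
      ENNReal.ofReal (Xi ρ α (fun m => k m ω) n) * ENNReal.ofReal (v 0 ω) :=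
    (measurable_Xi hk n).ennreal_ofReal.mul (hv 0).ennreal_ofReal
  calc ∑' t, ∫⁻ ω, ENNReal.ofReal (v t ω) ∂μ
      = ∫⁻ ω, ∑' t, ENNReal.ofReal (v t ω) ∂μ :=
        (lintegral_tsum fun t => (hv t).ennreal_ofReal.aemeasurable).symm
    _ ≤ ∫⁻ ω, ENNReal.ofReal (v 0 ω) + (∑' j : ℕ, ENNReal.ofReal ρ ^ j) * ENNReal.ofReal α *
        ∑' n, ENNReal.ofReal (Xi ρ α (fun m => k m ω) n) * ENNReal.ofReal (v 0 ω) ∂μ :=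
      lintegral_mono_ae <| hae.mono fun ω ⟨hkω, hk0, hvω⟩ =>
        hvω.tsum_ofReal_le hρ hα hkω hk0
    _ = _ := by
      rw [lintegral_add_left (hv 0).ennreal_ofReal,
        lintegral_const_mul _ (Measurable.tsum hXi_v0),
        lintegral_tsum fun n => (hXi_v0 n).aemeasurable]
      simp only [lintegral_Xi_mul_eq hk (hv 0) hindep, ENNReal.tsum_mul_right]

end Probability

theorem stability_from_geometric_ratio_general
    {Ω : Type*} [MeasurableSpace Ω] (P : Measure Ω) [IsProbabilityMeasure P]
    (ρ α : ℝ) (hρ : ρ ∈ Set.Ioo (0 : ℝ) 1) (hα : 0 < α)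
    (v : ℕ → Ω → ℝ) (k : ℕ → Ω → ℕ)
    (hvmeas : ∀ t, Measurable (v t)) (hkmeas : ∀ n, Measurable (k n))
    (hae : ∀ᵐ ω ∂P, StrictMono (fun n => k n ω) ∧ k 0 ω = 0 ∧
      IsCycleLyapunov ρ α (fun n => k n ω) (fun t => v t ω))
    (hindep : ProbabilityTheory.Indep
      (MeasurableSpace.comap (v 0) inferInstance)
      (⨆ n : ℕ, MeasurableSpace.comap (fun ω => k (n + 1) ω - k n ω) inferInstance) P)
    (hv0 : (∫⁻ ω, ENNReal.ofReal (v 0 ω) ∂P) < ⊤)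
    (Ω' : ℝ) (hΩ' : Ω' < 1)
    (hXi1 : (∫⁻ ω, ENNReal.ofReal (Xi ρ α (fun m => k m ω) 1) ∂P) < ⊤)
    (hratio : ∀ n : ℕ, 1 ≤ n →
      (∫⁻ ω, ENNReal.ofReal (Xi ρ α (fun m => k m ω) (n + 1)) ∂P) ≤
        ENNReal.ofReal Ω' * ∫⁻ ω, ENNReal.ofReal (Xi ρ α (fun m => k m ω) n) ∂P) :
    (∑' t : ℕ, ∫⁻ ω, ENNReal.ofReal (v t ω) ∂P) < ⊤ := by
  have hXi_sum : ∑' n, ∫⁻ ω, ENNReal.ofReal (Xi ρ α (fun m => k m ω) n) ∂P < ⊤ := by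
    rw [tsum_eq_zero_add' ENNReal.summable]
    refine ENNReal.add_lt_top.2 ⟨by simp, ?_⟩
    exact ENNReal.tsum_lt_top_of_succ_le_mul (ENNReal.ofReal_lt_one.2 hΩ') hXi1
      fun n => hratio (n + 1) (by omega)
  have hgeom : ∑' j : ℕ, ENNReal.ofReal ρ ^ j < ⊤ :=
    tsum_geometric_lt_top.2 (ENNReal.ofReal_lt_one.2 hρ.2)
  refine (tsum_lintegral_ofReal_le P hρ.1.le hα.le hvmeas hkmeas hae hindep).trans_lt ?_
  exact ENNReal.add_lt_top.2 ⟨hv0, ENNReal.mul_lt_top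
    (ENNReal.mul_lt_top hgeom ENNReal.ofReal_lt_top) (ENNReal.mul_lt_top hXi_sum hv0)⟩

theorem stability_from_geometric_ratio
    {Ω : Type*} [MeasurableSpace Ω] (P : Measure Ω) [IsProbabilityMeasure P]
    (ρ α : ℝ) (hρ : ρ ∈ Set.Ioo (0 : ℝ) 1) (hα : 0 < α)
    (v : ℕ → Ω → ℝ) (k : ℕ → Ω → ℕ)
    (hvmeas : ∀ t, Measurable (v t)) (hkmeas : ∀ n, Measurable (k n))
    (hvnn : ∀ t ω, 0 ≤ v t ω)
    (hae : ∀ᵐ ω ∂P, StrictMono (fun n => k n ω) ∧ k 0 ω = 0 ∧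
      IsCycleLyapunov ρ α (fun n => k n ω) (fun t => v t ω))
    (hindep : ProbabilityTheory.Indep
      (MeasurableSpace.comap (v 0) inferInstance)
      (⨆ n : ℕ, MeasurableSpace.comap (fun ω => k (n + 1) ω - k n ω) inferInstance) P)
    (hv0 : (∫⁻ ω, ENNReal.ofReal (v 0 ω) ∂P) < ⊤)
    (Ω' : ℝ) (hΩ' : Ω' < 1)
    (hXi1 : (∫⁻ ω, ENNReal.ofReal (Xi ρ α (fun m => k m ω) 1) ∂P) < ⊤)
    (hratio : ∀ n : ℕ, 1 ≤ n →
      (∫⁻ ω, ENNReal.ofReal (Xi ρ α (fun m => k m ω) (n + 1)) ∂P) ≤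
        ENNReal.ofReal Ω' * ∫⁻ ω, ENNReal.ofReal (Xi ρ α (fun m => k m ω) n) ∂P) :
    (∑' t : ℕ, ∫⁻ ω, ENNReal.ofReal (v t ω) ∂P) < ⊤ :=
  stability_from_geometric_ratio_general P ρ α hρ hα v k hvmeas hkmeas hae hindep hv0 Ω' hΩ' hXi1
    hratio
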